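/- If f(x,θ) is a C^∞ function jointly in x and a scalar parameter θ, and f_θ ∈ V for a linear subspace V of C(K, R^{c'×d}) closed in the uniform norm, with the second θ-derivative of f uniformly bounded, then the partial derivative ∂f_θ/∂θ (as a function of x) lies in the closure of V with respect to the uniform norm on the compact set K. -/

import Mathlib

/-- Closures of network classes are closed under parameter differentiation:
if `f(·, θ) ∈ V` for a uniformly-closed linear subspace `V` of functions on a
compact set `K`, `f` is jointly `C^∞`, and the second `θ`-derivative is uniformly
bounded, then `∂f_θ/∂θ` lies in the closure of `V` in the uniform norm on `K`. -/
theorem deriv_mem_closure (c c' d : ℕ) (K : Set (Fin c → Fin d → ℝ)) (hK : IsCompact K)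
    (V : Submodule ℝ ((Fin c → Fin d → ℝ) → (Fin c' → Fin d → ℝ)))
    (hVclosed : ∀ h : (Fin c → Fin d → ℝ) → (Fin c' → Fin d → ℝ),
      (∀ ε > 0, ∃ g ∈ V, ∀ x ∈ K, ‖h x - g x‖ ≤ ε) → h ∈ V)
    (f : ℝ → (Fin c → Fin d → ℝ) → (Fin c' → Fin d → ℝ))
    (hf : ContDiff ℝ (⊤ : ℕ∞) (fun p : ℝ × (Fin c → Fin d → ℝ) => f p.1 p.2))
    (hfV : ∀ θ : ℝ, f θ ∈ V)
    (M : ℝ) (hM : ∀ (θ : ℝ), ∀ x ∈ K, ‖iteratedDeriv 2 (fun t => f t x) θ‖ ≤ M)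
    (θ₀ : ℝ) :
    ∀ ε > 0, ∃ g ∈ V, ∀ x ∈ K, ‖deriv (fun t => f t x) θ₀ - g x‖ ≤ ε := by
  intro ε hε
  set h : ℝ := ε / (|M| + 1) with hh
  have hMpos : (0:ℝ) < |M| + 1 := by positivity
  have hhpos : 0 < h := div_pos hε hMpos
  refine ⟨h⁻¹ • (f (θ₀ + h) - f θ₀),
    V.smul_mem _ (V.sub_mem (hfV _) (hfV _)), ?_⟩
  intro x hx
  set u : ℝ → (Fin c' → Fin d → ℝ) := fun t => f t x with hu_def
  have hu : ContDiff ℝ (⊤ : ℕ∞) u := hf.comp (contDiff_id.prodMk contDiff_const)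
  have hud : Differentiable ℝ u := hu.differentiable (by simp)
  have hu2 : ContDiff ℝ ((⊤:ℕ∞):WithTop ℕ∞) u := hu.of_le (by simp)
  have hud' : Differentiable ℝ (deriv u) :=
    ((contDiff_infty_iff_deriv.mp hu2).2).differentiable (by simp)
  -- bound on the second derivative
  have hM2 : ∀ t : ℝ, ‖deriv (deriv u) t‖ ≤ M := by
    intro t
    have := hM t x hx
    rwa [iteratedDeriv_succ, iteratedDeriv_one] at this
  -- first step: Lipschitz bound on deriv u
  have hlip : ∀ t : ℝ, ‖deriv u t - deriv u θ₀‖ ≤ M * ‖t - θ₀‖ := by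
    intro t
    refine convex_univ.norm_image_sub_le_of_norm_hasDerivWithin_le
      (fun s _ => ((hud' s).hasDerivAt).hasDerivWithinAt)
      (fun s _ => hM2 s) (Set.mem_univ θ₀) (Set.mem_univ t)
  have hM0 : 0 ≤ M := le_trans (norm_nonneg _) (hM2 0)
  -- second step: Taylor bound via MVT on φ
  set φ : ℝ → (Fin c' → Fin d → ℝ) :=
    fun t => u t - u θ₀ - (t - θ₀) • deriv u θ₀ with hφ_def
  have hφderiv : ∀ t : ℝ, HasDerivAt φ (deriv u t - deriv u θ₀) t := by
    intro t
    have h1 : HasDerivAt u (deriv u t) t := (hud t).hasDerivAt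
    have h2 : HasDerivAt (fun s : ℝ => (s - θ₀) • deriv u θ₀)
        ((1:ℝ) • deriv u θ₀) t :=
      ((hasDerivAt_id t).sub_const θ₀).smul_const _
    have h3 := (h1.sub_const (u θ₀)).sub h2
    rw [one_smul] at h3
    exact h3
  have hbound : ‖φ (θ₀ + h) - φ θ₀‖ ≤ (M * h) * ‖(θ₀ + h) - θ₀‖ := by
    refine (convex_Icc θ₀ (θ₀ + h)).norm_image_sub_le_of_norm_hasDerivWithin_le
      (fun s _ => (hφderiv s).hasDerivWithinAt) ?_ ?_ ?_
    · intro s hs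
      refine (hlip s).trans ?_
      have h1 : ‖s - θ₀‖ ≤ h := by
        rw [Real.norm_eq_abs, abs_le]
        constructor <;> [linarith [hs.1]; linarith [hs.2]]
      exact mul_le_mul_of_nonneg_left h1 hM0
    · exact Set.left_mem_Icc.2 (by linarith)
    · exact Set.right_mem_Icc.2 (by linarith)
  have hφ0 : φ θ₀ = 0 := by simp [hφ_def]
  have hkey : ‖u (θ₀ + h) - u θ₀ - h • deriv u θ₀‖ ≤ M * h * h := by
    rw [hφ0, sub_zero] at hbound
    simpa [hφ_def, add_sub_cancel_left, abs_of_pos hhpos] using hbound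
  have hgx : (h⁻¹ • (f (θ₀ + h) - f θ₀)) x = h⁻¹ • (u (θ₀ + h) - u θ₀) := rfl
  rw [hgx]
  have heq : deriv u θ₀ - h⁻¹ • (u (θ₀ + h) - u θ₀)
      = h⁻¹ • (h • deriv u θ₀ - (u (θ₀ + h) - u θ₀)) := by
    rw [eq_comm, smul_sub, smul_smul, inv_mul_cancel₀ (ne_of_gt hhpos), one_smul]
  have : ‖deriv u θ₀ - h⁻¹ • (u (θ₀ + h) - u θ₀)‖ ≤ h⁻¹ * (M * h * h) := by
    rw [heq, norm_smul, Real.norm_eq_abs, abs_of_pos (inv_pos.2 hhpos)]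
    apply mul_le_mul_of_nonneg_left _ (le_of_lt (inv_pos.2 hhpos))
    calc ‖h • deriv u θ₀ - (u (θ₀ + h) - u θ₀)‖
        = ‖u (θ₀ + h) - u θ₀ - h • deriv u θ₀‖ := by rw [norm_sub_rev]
      _ ≤ M * h * h := hkey
  refine this.trans ?_
  have : h⁻¹ * (M * h * h) = M * h := by field_simp
  rw [this, hh]
  rw [div_eq_iff (ne_of_gt hMpos)] at hh
  calc M * (ε / (|M| + 1)) ≤ (|M| + 1) * (ε / (|M| + 1)) := by
        apply mul_le_mul_of_nonneg_right _ (le_of_lt (div_pos hε hMpos))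
        linarith [le_abs_self M]
    _ = ε := by field_simp
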